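/- The functions u(x,y) = |y| − (1/2)cosh(2x) and v(x,y) = −y·sinh(2x) satisfy ∂u/∂x = ∂v/∂y and ∂v/∂x = −2(v² + y²)^{1/2} ∂u/∂y at every point (x,y) ∈ ℝ² with y ≠ 0. -/

import Mathlib

/-- u(x,y) = |y| − (1/2) cosh 2x. -/
noncomputable def uPar (x y : ℝ) : ℝ := |y| - (1 / 2) * Real.cosh (2 * x)

/-- v(x,y) = −y sinh 2x. -/
noncomputable def vPar (x y : ℝ) : ℝ := -y * Real.sinh (2 * x)

/-! Both partial derivatives in the first equation are `-sinh 2x`. In the second, `u_y = sign y`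
and `√(v² + y²) = |y| cosh 2x`, and `|y| · sign y = y` gives `v_x = -2 y cosh 2x`. -/

open Real

theorem hasDerivAt_uPar_fst (x y : ℝ) :
    HasDerivAt (fun t => uPar t y) (-sinh (2 * x)) x :=
  ((((hasDerivAt_id' x).const_mul 2).cosh.const_mul (1 / 2)).const_sub |y|).congr_deriv
    (by ring)

theorem hasDerivAt_uPar_snd (x : ℝ) {y : ℝ} (hy : y ≠ 0) :
    HasDerivAt (fun t => uPar x t) (SignType.sign y : ℝ) y :=
  (hasDerivAt_abs hy).sub_const _

theorem hasDerivAt_vPar_fst (x y : ℝ) :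
    HasDerivAt (fun t => vPar t y) (-2 * y * cosh (2 * x)) x :=
  (((hasDerivAt_id' x).const_mul 2).sinh.const_mul (-y)).congr_deriv (by ring)

theorem hasDerivAt_vPar_snd (x y : ℝ) :
    HasDerivAt (fun t => vPar x t) (-sinh (2 * x)) y :=
  ((hasDerivAt_id' y).neg.mul_const (sinh (2 * x))).congr_deriv (by ring)

theorem sqrt_vPar_sq_add_sq (x y : ℝ) :
    √(vPar x y ^ 2 + y ^ 2) = |y| * cosh (2 * x) := by
  have h : vPar x y ^ 2 + y ^ 2 = (y * cosh (2 * x)) ^ 2 := by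
    rw [vPar]
    linear_combination y ^ 2 * (cosh_sq (2 * x)).symm
  rw [h, sqrt_sq_eq_abs, abs_mul, abs_of_pos (cosh_pos _)]

theorem paraboloid_solution (x y : ℝ) (hy : y ≠ 0) :
    deriv (fun t : ℝ => uPar t y) x = deriv (fun t : ℝ => vPar x t) y ∧
    deriv (fun t : ℝ => vPar t y) x =
      -2 * Real.sqrt ((vPar x y) ^ 2 + y ^ 2) * deriv (fun t : ℝ => uPar x t) y := by
  refine ⟨by rw [(hasDerivAt_uPar_fst x y).deriv, (hasDerivAt_vPar_snd x y).deriv], ?_⟩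
  rw [(hasDerivAt_vPar_fst x y).deriv, (hasDerivAt_uPar_snd x hy).deriv, sqrt_vPar_sq_add_sq]
  linear_combination 2 * cosh (2 * x) * abs_mul_sign y
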